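/- arXiv:2108.12274 — 3 statements merged into one kernel-verified Lean document; each statement's English description precedes it below -/
import Mathlib

section
/- Let R be a commutative ring, let J ⊆ I be ideals with I finitely generated, and suppose I^(r+1) = J · I^r for some r ≥ 0. Then every element x ∈ I is integral over J: there exist n ≥ 1 and elements c₁, …, cₙ with cᵢ ∈ J^i such that x^n + c₁ x^(n-1) + ⋯ + c_(n-1) x + cₙ = 0. -/
/-!
Multiplication by `x ∈ I` maps the finitely generated module `I ^ r` into `I ^ (r + 1) = J • I ^ r`,
so the determinant trick gives a monic `p` with `i`-th lower coefficient in `J ^ i` and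
`p(x) • I ^ r = 0`. In particular `p(x) x ^ r = 0`, so `X ^ (r + 1) p`, whose coefficients
still satisfy the degree condition, is an equation of integral dependence of `x` over `J`.
-/

open Polynomial

theorem Finset.sum_Icc_one_sub_eq_sum_range {M : Type*} [AddCommMonoid M] (f : ℕ → M) (n : ℕ) :
    ∑ i ∈ Finset.Icc 1 n, f (n - i) = ∑ k ∈ Finset.range n, f k := by
  rw [← Finset.sum_range_reflect, ← Finset.Ico_add_one_right_eq_Icc, Finset.sum_Ico_eq_sum_range]
  exact Finset.sum_congr (by simp) fun k _ => by congr 1; omega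

namespace Polynomial

variable {R : Type*} [CommRing R]

theorem Monic.exists_integral_equation_of_eval_eq_zero {J : Ideal R} {p : R[X]} (hp : p.Monic)
    (hdeg : 1 ≤ p.natDegree) (hcoeff : ∀ k, p.coeff k ∈ J ^ (p.natDegree - k)) {x : R}
    (hx : p.eval x = 0) :
    ∃ n : ℕ, 1 ≤ n ∧ ∃ c : ℕ → R,
      (∀ i ∈ Finset.Icc 1 n, c i ∈ J ^ i) ∧
      x ^ n + ∑ i ∈ Finset.Icc 1 n, c i * x ^ (n - i) = 0 := by
  refine ⟨p.natDegree, hdeg, fun i => p.coeff (p.natDegree - i), fun i hi => ?_, ?_⟩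
  · simpa [Nat.sub_sub_self (Finset.mem_Icc.mp hi).2] using hcoeff (p.natDegree - i)
  · rw [Finset.sum_Icc_one_sub_eq_sum_range fun k => p.coeff k * x ^ k, ← hx,
      eval_eq_sum_range, Finset.sum_range_succ, hp.coeff_natDegree, one_mul, add_comm]

theorem coeff_X_pow_mul_mem_pow_natDegree_sub {J : Ideal R} {p : R[X]} (hp : p.Monic)
    (hcoeff : ∀ k, p.coeff k ∈ J ^ (p.natDegree - k)) (m k : ℕ) :
    (X ^ m * p).coeff k ∈ J ^ ((X ^ m * p).natDegree - k) := by
  rw [coeff_X_pow_mul', (monic_X_pow m).natDegree_mul hp]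
  split_ifs with hmk
  · exact Ideal.pow_le_pow_right (by have := natDegree_X_pow_le (R := R) m; omega)
      (hcoeff (k - m))
  · exact zero_mem _

end Polynomial

theorem Submodule.exists_monic_and_coeff_mem_pow_and_eval_smul_eq_zero {R M : Type*} [CommRing R]
    [AddCommGroup M] [Module R M] {N : Submodule R M} (hN : N.FG) (J : Ideal R) {x : R}
    (hx : ∀ m ∈ N, x • m ∈ J • N) :
    ∃ p : R[X], p.Monic ∧ (∀ k, p.coeff k ∈ J ^ (p.natDegree - k)) ∧
      ∀ m ∈ N, p.eval x • m = 0 := by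
  have : Module.Finite R N := Module.Finite.iff_fg.mpr hN
  obtain ⟨p, hp, -, hcoeff, hpf⟩ :=
    LinearMap.exists_monic_and_natDegree_eq_and_coeff_mem_pow_and_aeval_eq_zero R
      (algebraMap R (Module.End R N) x) J (by
        rintro _ ⟨m, rfl⟩
        exact (Submodule.mem_smul_top_iff J N _).mpr (hx m m.2))
  refine ⟨p, hp, hcoeff, fun m hm => ?_⟩
  rw [aeval_algebraMap_apply, coe_aeval_eq_eval] at hpf
  simpa using congrArg (fun f : Module.End R N => (f ⟨m, hm⟩ : M)) hpf

theorem integral_over_reduction_general {R : Type*} [CommRing R] (I J : Ideal R)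
    (hfg : I.FG) (r : ℕ) (hred : I ^ (r + 1) = J * I ^ r) :
    ∀ x ∈ I, ∃ n : ℕ, 1 ≤ n ∧ ∃ c : ℕ → R,
      (∀ i ∈ Finset.Icc 1 n, c i ∈ J ^ i) ∧
      x ^ n + ∑ i ∈ Finset.Icc 1 n, c i * x ^ (n - i) = 0 := by
  intro x hx
  rcases subsingleton_or_nontrivial R with _ | _
  · exact ⟨1, le_rfl, 0, fun i _ => zero_mem (J ^ i), Subsingleton.elim _ _⟩
  have hmul : ∀ m ∈ I ^ r, x • m ∈ J • I ^ r := fun m hm => by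
    rw [Ideal.smul_eq_mul, ← hred, pow_succ']
    exact Ideal.mul_mem_mul hx hm
  obtain ⟨p, hp, hcoeff, hann⟩ :=
    Submodule.exists_monic_and_coeff_mem_pow_and_eval_smul_eq_zero (Ideal.FG.pow hfg) J hmul
  have hxr : p.eval x * x ^ r = 0 := hann _ (Ideal.pow_mem_pow hx r)
  -- `p` itself may have degree zero (when `I ^ r = 0`); the factor `X ^ (r + 1)` repairs this.
  refine ((monic_X_pow (r + 1)).mul hp).exists_integral_equation_of_eval_eq_zero ?_
    (coeff_X_pow_mul_mem_pow_natDegree_sub hp hcoeff (r + 1)) ?_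
  · rw [(monic_X_pow _).natDegree_mul hp, natDegree_X_pow]
    omega
  · rw [eval_mul, eval_pow, eval_X]
    linear_combination x * hxr

theorem integral_over_reduction {R : Type*} [CommRing R] (I J : Ideal R)
    (hJI : J ≤ I) (hfg : I.FG) (r : ℕ) (hred : I ^ (r + 1) = J * I ^ r) :
    ∀ x ∈ I, ∃ n : ℕ, 1 ≤ n ∧ ∃ c : ℕ → R,
      (∀ i ∈ Finset.Icc 1 n, c i ∈ J ^ i) ∧
      x ^ n + ∑ i ∈ Finset.Icc 1 n, c i * x ^ (n - i) = 0 :=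
  integral_over_reduction_general I J hfg r hred
end

section
/- Let M be a real symmetric negative definite n×n matrix with M_{ij} ≥ 0 for all i ≠ j, and suppose the graph on {1,…,n} with an edge between i and j whenever M_{ij} > 0 is connected. Then every entry of the inverse matrix M⁻¹ is strictly negative. -/
/-!
With `A = -M`, a positive definite matrix with nonpositive off-diagonal entries, the `j`-th
column `x` of `A⁻¹` solves `A x = eⱼ ≥ 0`. Splitting `x = x⁺ - x⁻`, the off-diagonal sign
condition gives `x⁻ ⬝ A x⁻ ≤ 0`, so `x⁻ = 0` by definiteness. A zero coordinate `x a = 0` then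
forces `x b = 0` for every neighbour `b` of `a`, since `(A x) a = ∑_{b ≠ a} A a b x b ≥ 0`;
by connectivity `x` would vanish, contradicting `A x = eⱼ`.
-/

namespace Matrix

theorem inv_neg {n α : Type*} [Fintype n] [DecidableEq n] [CommRing α] (A : Matrix n n α) :
    (-A)⁻¹ = -A⁻¹ := by
  by_cases h : IsUnit A.det
  · exact inv_eq_left_inv (by rw [neg_mul_neg, nonsing_inv_mul _ h])
  · have h' : ¬IsUnit (-A).det := by
      rwa [det_neg, IsUnit.mul_iff, and_iff_right (isUnit_neg_one.pow _)]
    rw [nonsing_inv_apply_not_isUnit _ h, nonsing_inv_apply_not_isUnit _ h', neg_zero]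

section ZMatrix

variable {ι R : Type*} [Fintype ι] [CommRing R] [LinearOrder R] [IsStrictOrderedRing R]
  {A : Matrix ι ι R}

lemma dotProduct_mulVec_nonpos_of_offDiag_nonpos (hA : ∀ i j, i ≠ j → A i j ≤ 0)
    {p q : ι → R} (hp : 0 ≤ p) (hq : 0 ≤ q) (hpq : ∀ i, q i * p i = 0) :
    q ⬝ᵥ A *ᵥ p ≤ 0 := by
  rw [dot_mulVec_eq_sum_sum]
  refine Finset.sum_nonpos fun j _ ↦ Finset.sum_nonpos fun i _ ↦ ?_
  rcases eq_or_ne i j with rfl | hij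
  · rw [mul_right_comm, hpq, zero_mul]
  · exact mul_nonpos_of_nonpos_of_nonneg
      (mul_nonpos_of_nonneg_of_nonpos (hq i) (hA i j hij)) (hp j)

theorem PosDef.nonneg_of_mulVec_nonneg [StarRing R] [TrivialStar R] (hA : A.PosDef)
    (hoff : ∀ i j, i ≠ j → A i j ≤ 0) {x : ι → R} (hAx : 0 ≤ A *ᵥ x) : 0 ≤ x := by
  suffices hneg : x⁻ = 0 by
    rw [← posPart_sub_negPart x, hneg, sub_zero]
    exact posPart_nonneg x
  by_contra hne
  have hpos : 0 < x⁻ ⬝ᵥ A *ᵥ x⁻ := by simpa using hA.dotProduct_mulVec_pos hne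
  have hdisj : ∀ i, x⁻ i * x⁺ i = 0 := fun i ↦ by
    rcases le_total (x i) 0 with h | h
    · simp [posPart_eq_zero.2 h]
    · simp [negPart_eq_zero.2 h]
  have hcross : x⁻ ⬝ᵥ A *ᵥ x⁺ ≤ 0 :=
    dotProduct_mulVec_nonpos_of_offDiag_nonpos hoff (posPart_nonneg x) (negPart_nonneg x) hdisj
  have hx : 0 ≤ x⁻ ⬝ᵥ A *ᵥ x := dotProduct_nonneg_of_nonneg (negPart_nonneg x) hAx
  have hsplit : x⁻ ⬝ᵥ A *ᵥ x⁻ = x⁻ ⬝ᵥ A *ᵥ x⁺ - x⁻ ⬝ᵥ A *ᵥ x := by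
    rw [sub_eq_iff_eq_add'.1 (posPart_sub_negPart x), mulVec_add, dotProduct_add]
    ring
  linarith

lemma apply_eq_zero_of_mulVec_apply_nonneg (hoff : ∀ i j, i ≠ j → A i j ≤ 0) {x : ι → R}
    (hx : 0 ≤ x) {a b : ι} (hAx : 0 ≤ (A *ᵥ x) a) (ha : x a = 0) (hab : A a b < 0) :
    x b = 0 := by
  have hterm : ∀ c ∈ Finset.univ, A a c * x c ≤ 0 := fun c _ ↦ by
    rcases eq_or_ne a c with rfl | hac
    · rw [ha, mul_zero]
    · exact mul_nonpos_of_nonpos_of_nonneg (hoff a c hac) (hx c)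
  have hsum : ∑ c, A a c * x c = 0 := le_antisymm (Finset.sum_nonpos hterm) hAx
  have hb := (Finset.sum_eq_zero_iff_of_nonpos hterm).1 hsum b (Finset.mem_univ b)
  exact (mul_eq_zero.1 hb).resolve_left hab.ne

theorem pos_of_mulVec_nonneg (hoff : ∀ i j, i ≠ j → A i j ≤ 0)
    (hconn : ∀ i j, Relation.ReflTransGen (fun a b ↦ A a b < 0) i j) {x : ι → R}
    (hx : 0 ≤ x) (hAx : 0 ≤ A *ᵥ x) (hAx₀ : A *ᵥ x ≠ 0) (i : ι) : 0 < x i := by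
  refine (hx i).lt_of_ne fun hi ↦ hAx₀ ?_
  have hzero : x = 0 := funext fun j ↦ by
    induction hconn i j with
    | refl => exact hi.symm
    | tail _ hbc ih => exact apply_eq_zero_of_mulVec_apply_nonneg hoff hx (hAx _) ih hbc
  rw [hzero, mulVec_zero]

end ZMatrix

theorem PosDef.inv_apply_pos {ι K : Type*} [Fintype ι] [DecidableEq ι] [Field K] [LinearOrder K]
    [IsStrictOrderedRing K] [StarRing K] [TrivialStar K] {A : Matrix ι ι K} (hA : A.PosDef)
    (hoff : ∀ i j, i ≠ j → A i j ≤ 0)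
    (hconn : ∀ i j, Relation.ReflTransGen (fun a b ↦ A a b < 0) i j) (i j : ι) :
    0 < A⁻¹ i j := by
  have hAx : A *ᵥ A⁻¹.col j = Pi.single j 1 := by
    rw [← mulVec_single_one, mulVec_mulVec,
      mul_nonsing_inv _ (A.isUnit_iff_isUnit_det.1 hA.isUnit), one_mulVec]
  have hsingle : (0 : ι → K) ≤ Pi.single j 1 := Pi.single_nonneg.2 zero_le_one
  exact pos_of_mulVec_nonneg hoff hconn (hA.nonneg_of_mulVec_nonneg hoff (hAx ▸ hsingle))
    (hAx ▸ hsingle) (hAx ▸ Pi.single_ne_zero_iff.2 one_ne_zero) i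

end Matrix

theorem inverse_entries_neg_general (n : ℕ) (M : Matrix (Fin n) (Fin n) ℝ)
    (hnegdef : (-M).PosDef)
    (hoffdiag : ∀ i j, i ≠ j → 0 ≤ M i j)
    (hconn : ∀ i j : Fin n,
      Relation.ReflTransGen (fun a b => a ≠ b ∧ 0 < M a b) i j) :
    ∀ i j, M⁻¹ i j < 0 := by
  intro i j
  have hoff : ∀ a b, a ≠ b → (-M) a b ≤ 0 := fun a b hab ↦ neg_nonpos.2 (hoffdiag a b hab)
  have hconn' : ∀ a b, Relation.ReflTransGen (fun c d ↦ (-M) c d < 0) a b :=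
    fun a b ↦ Relation.ReflTransGen.mono (fun _ _ h ↦ neg_neg_iff_pos.2 h.2) a b (hconn a b)
  have hpos := hnegdef.inv_apply_pos hoff hconn' i j
  rwa [Matrix.inv_neg, Matrix.neg_apply, neg_pos] at hpos

theorem inverse_entries_neg (n : ℕ) (M : Matrix (Fin n) (Fin n) ℝ)
    (hsymm : M.IsSymm) (hnegdef : (-M).PosDef)
    (hoffdiag : ∀ i j, i ≠ j → 0 ≤ M i j)
    (hconn : ∀ i j : Fin n,
      Relation.ReflTransGen (fun a b => a ≠ b ∧ 0 < M a b) i j) :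
    ∀ i j, M⁻¹ i j < 0 :=
  inverse_entries_neg_general n M hnegdef hoffdiag hconn
end

section
/- Let K be a field, S ⊆ K an infinite subset, n a natural number, and V a finite-dimensional K-subspace of the polynomial ring K[X]. Suppose that for every choice of n distinct points p₁,…,pₙ ∈ S there exists a nonzero polynomial p ∈ V vanishing at all of p₁,…,pₙ. Then dim V ≥ n + 1. -/
theorem linear_system_dim_bound {K : Type*} [Field K] (S : Set K) (hS : S.Infinite)
    (n : ℕ) (V : Submodule K (Polynomial K)) [FiniteDimensional K V]
    (h : ∀ p : Fin n → K, (∀ i, p i ∈ S) → Function.Injective p →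
      ∃ q ∈ V, q ≠ 0 ∧ ∀ i, Polynomial.eval (p i) q = 0) :
    n + 1 ≤ Module.finrank K V := by
  classical
  -- Lemma B: any k ≤ n distinct points of S can be hit
  have extend : ∀ (k : ℕ), k ≤ n → ∀ (p : Fin k → K), (∀ i, p i ∈ S) →
      Function.Injective p →
      ∃ q ∈ V, q ≠ 0 ∧ ∀ i, Polynomial.eval (p i) q = 0 := by
    intro k hk p hpS hpI
    have hinf : (S \ Set.range p).Infinite := hS.diff (Set.finite_range p)
    let e := hinf.natEmbedding
    set b : Fin (n - k) → K := fun i => (e i : K) with hb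
    have hbmem : ∀ i, b i ∈ S \ Set.range p := fun i => (e i).2
    have hbI : Function.Injective b := by
      intro i j hij
      exact Fin.val_injective (e.injective (Subtype.ext hij))
    set P : Fin n → K := fun j =>
      if hj : (j : ℕ) < k then p ⟨j, hj⟩ else b ⟨(j : ℕ) - k, by omega⟩ with hP
    have hPS : ∀ j, P j ∈ S := by
      intro j
      simp only [hP]
      split
      · exact hpS _
      · exact (hbmem _).1
    have hPI : Function.Injective P := by
      intro j₁ j₂ hj
      simp only [hP] at hj
      split at hj <;> split at hj
      · have := hpI hj
        have h2 := congrArg Fin.val this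
        simp only at h2
        exact Fin.ext h2
      · exact absurd ⟨_, hj⟩ (hbmem _).2
      · exact absurd ⟨_, hj.symm⟩ (hbmem _).2
      · have := congrArg Fin.val (hbI hj)
        simp only at this
        omega
    obtain ⟨q, hqV, hq0, hqz⟩ := h P hPS hPI
    refine ⟨q, hqV, hq0, fun i => ?_⟩
    have := hqz ⟨i, lt_of_lt_of_le i.2 hk⟩
    simpa only [hP, dif_pos i.2] using this
  -- Key: build triangular family
  have key : ∀ k : ℕ, k ≤ n + 1 → ∃ (a : Fin k → K) (q : Fin k → Polynomial K),
      (∀ i, a i ∈ S) ∧ Function.Injective a ∧ (∀ i, q i ∈ V) ∧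
      (∀ i, Polynomial.eval (a i) (q i) ≠ 0) ∧
      (∀ i j : Fin k, j < i → Polynomial.eval (a j) (q i) = 0) := by
    intro k
    induction k with
    | zero =>
      intro _
      exact ⟨Fin.elim0, Fin.elim0, fun i => i.elim0, fun i => i.elim0,
        fun i => i.elim0, fun i => i.elim0, fun i => i.elim0⟩
    | succ k ih =>
      intro hk
      obtain ⟨a, q, haS, haI, hqV, hqnz, hqz⟩ := ih (by omega)
      obtain ⟨r, hrV, hr0, hrz⟩ := extend k (by omega) a haS haI
      have hfin : (Set.range a ∪ {x | r.IsRoot x}).Finite :=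
        (Set.finite_range a).union (Polynomial.finite_setOf_isRoot hr0)
      obtain ⟨c, hcS, hcT⟩ := (hS.diff hfin).nonempty
      have hcr : Polynomial.eval c r ≠ 0 := fun hh => hcT (Or.inr hh)
      have hca : c ∉ Set.range a := fun hh => hcT (Or.inl hh)
      refine ⟨Fin.snoc a c, Fin.snoc q r, ?_, ?_, ?_, ?_, ?_⟩
      · intro i
        refine Fin.lastCases ?_ ?_ i
        · simpa using hcS
        · intro j; simpa using haS j
      · intro i j hij
        rcases Fin.eq_castSucc_or_eq_last i with ⟨i', rfl⟩ | rfl <;>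
          rcases Fin.eq_castSucc_or_eq_last j with ⟨j', rfl⟩ | rfl
        · simp only [Fin.snoc_castSucc] at hij
          exact congrArg Fin.castSucc (haI hij)
        · simp only [Fin.snoc_castSucc, Fin.snoc_last] at hij
          exact absurd ⟨i', hij⟩ hca
        · simp only [Fin.snoc_castSucc, Fin.snoc_last] at hij
          exact absurd ⟨j', hij.symm⟩ hca
        · rfl
      · intro i
        refine Fin.lastCases ?_ ?_ i
        · simpa using hrV
        · intro j; simpa using hqV j
      · intro i
        refine Fin.lastCases ?_ ?_ i
        · simpa using hcr
        · intro j; simpa using hqnz j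
      · intro i j hij
        rcases Fin.eq_castSucc_or_eq_last i with ⟨i', rfl⟩ | rfl <;>
          rcases Fin.eq_castSucc_or_eq_last j with ⟨j', rfl⟩ | rfl
        · simp only [Fin.snoc_castSucc]
          exact hqz i' j' (by exact_mod_cast hij)
        · exact absurd hij (by simp [Fin.lt_iff_val_lt_val, Fin.le_last, Nat.not_lt.2 (Nat.le_of_lt_succ (Fin.is_lt _))])
        · simp only [Fin.snoc_castSucc, Fin.snoc_last]
          exact hrz j'
        · exact absurd hij (lt_irrefl _)
  obtain ⟨a, q, haS, haI, hqV, hqnz, hqz⟩ := key (n + 1) le_rfl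
  -- the family in V
  set f : Fin (n + 1) → V := fun i => ⟨q i, hqV i⟩ with hf
  have hli : LinearIndependent K f := by
    rw [Fintype.linearIndependent_iff]
    intro g hg
    suffices hs : ∀ m : ℕ, ∀ hm : m < n + 1, g ⟨m, hm⟩ = 0 by
      intro i; exact hs i.1 i.2
    intro m
    induction m using Nat.strong_induction_on with
    | _ m IH =>
      intro hm
      set i : Fin (n + 1) := ⟨m, hm⟩ with hi
      have hev : Polynomial.eval (a i) ((∑ j, g j • f j : V) : Polynomial K) = 0 := by
        rw [hg]; simp
      rw [Submodule.coe_sum] at hev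
      simp only [Submodule.coe_smul, hf, smul_eq_mul] at hev
      rw [Polynomial.eval_finset_sum] at hev
      have hsingle : ∀ j ∈ Finset.univ, j ≠ i →
          Polynomial.eval (a i) (g j • q j) = 0 := by
        intro j _ hji
        rcases lt_or_gt_of_ne hji with hlt | hgt
        · have : g j = 0 := IH j.1 hlt j.2
          simp [this]
        · rw [Polynomial.eval_smul]
          rw [hqz j i hgt]
          simp
      have := Finset.sum_eq_single_of_mem i (Finset.mem_univ i) hsingle ▸ hev
      rw [Finset.sum_eq_single_of_mem i (Finset.mem_univ i) hsingle] at hev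
      rw [Polynomial.eval_smul, smul_eq_mul] at hev
      exact (mul_eq_zero.mp hev).resolve_right (hqnz i)
  have := hli.fintype_card_le_finrank
  simpa using this
end
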